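/- arXiv:1006.0780 — 2 statements merged into one kernel-verified Lean document; each statement's English description precedes it below -/
import Mathlib

section
/- Let Γ be an abstract simplicial complex on a finite vertex set V and let σ ⊆ V be any subset (not necessarily a face of Γ). Then the subspace ‖Γ_{≤σ̂}‖ is a deformation retract of ‖Γ‖ ∖ ‖Γ_{≤σ}‖, where ‖Γ_{≤σ}‖ and ‖Γ_{≤σ̂}‖ are viewed as subspaces of the geometric realization ‖Γ‖. -/
open Finset

/-- An abstract simplicial complex on a vertex type `V`: a collection of finite subsets of `V`
(called faces) closed under taking subsets. -/
structure ASC (V : Type) where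
  faces : Set (Finset V)
  down_closed : ∀ ⦃σ τ : Finset V⦄, σ ∈ faces → τ ⊆ σ → τ ∈ faces

namespace ASC

variable {V : Type}

/-- `Γ.restrict σ` is the subcomplex `Γ_{≤σ}` of all faces of `Γ` contained in `σ`. -/
def restrict (Γ : ASC V) (σ : Finset V) : ASC V where
  faces := {τ | τ ∈ Γ.faces ∧ τ ⊆ σ}
  down_closed := by
    intro τ τ' h hsub
    exact ⟨Γ.down_closed h.1 hsub, hsub.trans h.2⟩

/-- The link of `σ` in `Γ`: all faces `τ` with `τ ∪ σ ∈ Γ` and `τ ∩ σ = ∅`. -/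
def link [DecidableEq V] (Γ : ASC V) (σ : Finset V) : ASC V where
  faces := {τ | τ ∪ σ ∈ Γ.faces ∧ τ ∩ σ = ∅}
  down_closed := by
    intro τ τ' h hsub
    refine ⟨Γ.down_closed h.1 (Finset.union_subset_union hsub (Finset.Subset.refl σ)), ?_⟩
    rw [← Finset.subset_empty, ← h.2]
    exact Finset.inter_subset_inter hsub (Finset.Subset.refl σ)

/-- The Alexander dual `Γ* = {σ ⊆ V ∣ V∖σ ∉ Γ}`. -/
def dual [DecidableEq V] [Fintype V] (Γ : ASC V) : ASC V where
  faces := {σ | σᶜ ∉ Γ.faces}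
  down_closed := by
    intro σ τ hσ hsub hmem
    exact hσ (Γ.down_closed hmem (Finset.compl_subset_compl.mpr hsub))

/-- A maximal face (facet) of `Γ`. -/
def IsMaximalFace (Γ : ASC V) (τ : Finset V) : Prop :=
  τ ∈ Γ.faces ∧ ∀ τ' ∈ Γ.faces, τ ⊆ τ' → τ' = τ

/-- A minimal non-face of `Γ`: not a face of `Γ`, but all of its proper subsets are faces. -/
def IsMinimalNonFace (Γ : ASC V) (J : Finset V) : Prop :=
  J ∉ Γ.faces ∧ ∀ J' ⊂ J, J' ∈ Γ.faces

/-- `I` belongs to `U_SR`: it is a union of (a nonempty finite family of)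
minimal non-faces of `Γ`. -/
def memUSR [DecidableEq V] (Γ : ASC V) (I : Finset V) : Prop :=
  ∃ S : Finset (Finset V), S.Nonempty ∧ (∀ J ∈ S, Γ.IsMinimalNonFace J) ∧ I = S.sup id

section Homology

variable (K : Type) [Field K] [LinearOrder V]

/-- The `j`-dimensional faces of `Γ` (faces of cardinality `j + 1`). -/
def Cells (Γ : ASC V) (j : ℤ) : Type :=
  {σ : Finset V // σ ∈ Γ.faces ∧ (σ.card : ℤ) = j + 1}

/-- The space of simplicial `j`-chains with coefficients in `K`, i.e. the free `K`-module on the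
`j`-dimensional faces.  (This is the augmented/reduced chain complex: the empty face, if present,
spans the chains in degree `-1`.) -/
def Chains (Γ : ASC V) (j : ℤ) : Type := Cells Γ j →₀ K

noncomputable instance (Γ : ASC V) (j : ℤ) : AddCommGroup (Chains K Γ j) :=
  inferInstanceAs (AddCommGroup (Cells Γ j →₀ K))

noncomputable instance (Γ : ASC V) (j : ℤ) : Module K (Chains K Γ j) :=
  inferInstanceAs (Module K (Cells Γ j →₀ K))

/-- The simplicial boundary map from `j`-chains to `k = (j-1)`-chains, with the usual
alternating signs determined by the linear order on the vertices. -/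
noncomputable def boundary (Γ : ASC V) (j k : ℤ) (hk : k = j - 1) :
    Chains K Γ j →ₗ[K] Chains K Γ k :=
  Finsupp.lsum K fun σ : Cells Γ j =>
    LinearMap.toSpanSingleton K (Chains K Γ k)
      (∑ v ∈ σ.1.attach,
        (Finsupp.single
          (⟨σ.1.erase v.1,
            Γ.down_closed σ.2.1 (Finset.erase_subset _ _), by
              have h1 := Finset.card_erase_of_mem v.2
              have h2 : 1 ≤ σ.1.card := Finset.card_pos.mpr ⟨v.1, v.2⟩
              have h3 := σ.2.2
              omega⟩ : Cells Γ k)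
          ((-1 : K) ^ (σ.1.filter (fun w => w < v.1)).card) : Cells Γ k →₀ K))

/-- Reduced simplicial homology of `Γ` in degree `j` with coefficients in `K`:
cycles modulo (cycles that are boundaries). -/
noncomputable abbrev reducedHomology (Γ : ASC V) (j : ℤ) : Type :=
  ↥(LinearMap.ker (boundary K Γ j (j - 1) rfl)) ⧸
    Submodule.comap (LinearMap.ker (boundary K Γ j (j - 1) rfl)).subtype
      (LinearMap.range (boundary K Γ (j + 1) j (by omega)))

/-- Simplicial `j`-cochains: the `K`-linear dual of the space of `j`-chains. -/
def Cochains (Γ : ASC V) (j : ℤ) : Type := Chains K Γ j →ₗ[K] K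

noncomputable instance (Γ : ASC V) (j : ℤ) : AddCommGroup (Cochains K Γ j) :=
  inferInstanceAs (AddCommGroup (Chains K Γ j →ₗ[K] K))

noncomputable instance (Γ : ASC V) (j : ℤ) : Module K (Cochains K Γ j) :=
  inferInstanceAs (Module K (Chains K Γ j →ₗ[K] K))

/-- The simplicial coboundary map, the dual of the boundary map. -/
noncomputable def coboundary (Γ : ASC V) (j k : ℤ) (hk : k = j + 1) :
    Cochains K Γ j →ₗ[K] Cochains K Γ k :=
  (boundary K Γ k j (by omega)).dualMap

/-- Reduced simplicial cohomology of `Γ` in degree `j` with coefficients in `K`: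
cocycles modulo (cocycles that are coboundaries). -/
noncomputable abbrev reducedCohomology (Γ : ASC V) (j : ℤ) : Type :=
  ↥(LinearMap.ker (coboundary K Γ j (j + 1) rfl)) ⧸
    Submodule.comap (LinearMap.ker (coboundary K Γ j (j + 1) rfl)).subtype
      (LinearMap.range (coboundary K Γ (j - 1) j (by omega)))

end Homology

/-- The geometric realization `‖Γ‖` of `Γ`, as the subset of `V → ℝ` consisting of the
convex-weight functions whose support is a face of `Γ`. -/
def realization [Fintype V] (Γ : ASC V) : Set (V → ℝ) :=
  {x | (∀ v, 0 ≤ x v) ∧ (∑ v, x v) = 1 ∧ ∃ τ ∈ Γ.faces, ∀ v, x v ≠ 0 ↔ v ∈ τ}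

end ASC

/-- `A` is a deformation retract of `X` (as subspaces of an ambient space `α`): the identity of
`X` is homotopic to a retraction of `X` onto `A`. -/
def IsDeformationRetract {α : Type} [TopologicalSpace α] (A X : Set α) : Prop :=
  A ⊆ X ∧ ∃ H : C(↥X × ↥unitInterval, ↥X),
    (∀ x, H (x, 0) = x) ∧ (∀ x, (H (x, 1) : α) ∈ A) ∧
      (∀ x : ↥X, (x : α) ∈ A → H (x, 1) = x)

/-! The deformation is the straight-line homotopy from `x` to the point obtained by deleting the
`σ`-coordinates of `x` and renormalizing. Off `‖Γ_{≤σ}‖` some vertex outside `σ` carries positive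
weight, so the renormalization is defined; along the segment no new vertex enters the support (so
it stays in `‖Γ‖`) and that vertex keeps positive weight (so it stays off `‖Γ_{≤σ}‖`). -/

section StraightLine

variable {α : Type} [TopologicalSpace α] [AddCommGroup α] [Module ℝ α] [ContinuousAdd α]
  [ContinuousSMul ℝ α]

theorem isDeformationRetract_of_segment_subset {A X : Set α} {r : α → α} (hAX : A ⊆ X)
    (hr : ContinuousOn r X) (hrA : ∀ x ∈ X, r x ∈ A) (hr_fix : ∀ x ∈ A, r x = x)
    (hseg : ∀ x ∈ X, segment ℝ x (r x) ⊆ X) : IsDeformationRetract A X := by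
  have hr' : Continuous fun p : X × unitInterval => r p.1 :=
    hr.comp_continuous (by fun_prop) fun p => p.1.2
  have hmem : ∀ p : X × unitInterval, (1 - (p.2 : ℝ)) • (p.1 : α) + (p.2 : ℝ) • r p.1 ∈ X :=
    fun ⟨x, t⟩ => hseg x x.2 ⟨1 - t, t, by simp [t.2.2], t.2.1, by ring, rfl⟩
  refine ⟨hAX, ⟨fun p => ⟨_, hmem p⟩, ?_⟩, fun x => ?_, fun x => ?_, fun x hx => ?_⟩
  · have ht : Continuous fun p : X × unitInterval => (p.2 : ℝ) := by fun_prop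
    exact Continuous.subtype_mk (((continuous_const.sub ht).smul (by fun_prop)).add
      (ht.smul hr')) _
  · ext1; simp
  · simpa using hrA x x.2
  · ext1; simpa using hr_fix x hx

end StraightLine

namespace ASC

variable {V : Type} [Fintype V]

theorem stdSimplex_of_mem_realization {Γ : ASC V} {x : V → ℝ} (hx : x ∈ Γ.realization) :
    x ∈ stdSimplex ℝ V :=
  ⟨hx.1, hx.2.1⟩

theorem mem_realization_of_zero_imp_zero {Γ : ASC V} {x y : V → ℝ} (hx : x ∈ Γ.realization)
    (hy : y ∈ stdSimplex ℝ V) (hxy : ∀ v, x v = 0 → y v = 0) : y ∈ Γ.realization := by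
  classical
  obtain ⟨-, -, τ, hτ, hxτ⟩ := hx
  refine ⟨hy.1, hy.2, univ.filter (y · ≠ 0), Γ.down_closed hτ fun v hv => ?_, by simp⟩
  exact (hxτ v).1 fun hxv => (mem_filter.1 hv).2 (hxy v hxv)

theorem mem_realization_restrict_iff {Γ : ASC V} {σ : Finset V} {x : V → ℝ} :
    x ∈ (Γ.restrict σ).realization ↔ x ∈ Γ.realization ∧ ∀ v ∉ σ, x v = 0 := by
  constructor
  · rintro ⟨h0, h1, τ, ⟨hτ, hτσ⟩, hxτ⟩
    exact ⟨⟨h0, h1, τ, hτ, hxτ⟩, fun v hv => not_not.1 fun hxv => hv (hτσ ((hxτ v).1 hxv))⟩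
  · rintro ⟨⟨h0, h1, τ, hτ, hxτ⟩, hσ⟩
    refine ⟨h0, h1, τ, ⟨hτ, fun v hv => ?_⟩, hxτ⟩
    exact not_not.1 fun hvσ => (hxτ v).2 hv (hσ v hvσ)

theorem exists_ne_zero_of_mem_realization {Γ : ASC V} {x : V → ℝ} (hx : x ∈ Γ.realization) :
    ∃ v, x v ≠ 0 := by
  obtain ⟨v, -, hv⟩ := Finset.exists_ne_zero_of_sum_ne_zero (hx.2.1 ▸ one_ne_zero)
  exact ⟨v, hv⟩

theorem mem_realization_sdiff_restrict_iff {Γ : ASC V} {σ : Finset V} {x : V → ℝ} :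
    x ∈ Γ.realization \ (Γ.restrict σ).realization ↔ x ∈ Γ.realization ∧ ∃ v ∉ σ, x v ≠ 0 := by
  rw [Set.mem_sdiff, mem_realization_restrict_iff]
  simp only [not_and, not_forall, exists_prop]
  tauto

variable [DecidableEq V]

theorem realization_restrict_compl_subset (Γ : ASC V) (σ : Finset V) :
    (Γ.restrict σᶜ).realization ⊆ Γ.realization \ (Γ.restrict σ).realization := by
  intro x hx
  obtain ⟨hxΓ, hσ⟩ := mem_realization_restrict_iff.1 hx
  obtain ⟨v, hv⟩ := exists_ne_zero_of_mem_realization hxΓ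
  exact mem_realization_sdiff_restrict_iff.2
    ⟨hxΓ, v, fun hvσ => hv (hσ v (notMem_compl.2 hvσ)), hv⟩

end ASC

section DeleteAndNormalize

variable {V : Type} [Fintype V] [DecidableEq V] (σ : Finset V)

noncomputable def deleteAndNormalize (x : V → ℝ) : V → ℝ :=
  fun v => if v ∈ σ then 0 else x v / ∑ w ∈ σᶜ, x w

variable {σ}

theorem continuousOn_deleteAndNormalize :
    ContinuousOn (deleteAndNormalize σ) {x | ∑ w ∈ σᶜ, x w ≠ 0} := by
  refine continuousOn_pi.2 fun v => ?_
  unfold deleteAndNormalize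
  split_ifs
  · exact continuousOn_const
  · exact ContinuousOn.div (by fun_prop) (by fun_prop) fun x hx => hx

theorem deleteAndNormalize_eq_zero_of_mem {x : V → ℝ} {v : V} (hv : v ∈ σ) :
    deleteAndNormalize σ x v = 0 := if_pos hv

theorem deleteAndNormalize_eq_zero_of_eq_zero {x : V → ℝ} {v : V} (hxv : x v = 0) :
    deleteAndNormalize σ x v = 0 := by
  simp [deleteAndNormalize, hxv]

theorem deleteAndNormalize_pos {x : V → ℝ} {v : V} (hv : v ∉ σ) (hxv : 0 < x v)
    (hs : 0 < ∑ w ∈ σᶜ, x w) : 0 < deleteAndNormalize σ x v := by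
  simpa [deleteAndNormalize, hv] using div_pos hxv hs

theorem deleteAndNormalize_mem_stdSimplex {x : V → ℝ} (hx : x ∈ stdSimplex ℝ V)
    (hs : 0 < ∑ w ∈ σᶜ, x w) : deleteAndNormalize σ x ∈ stdSimplex ℝ V := by
  refine ⟨fun v => ?_, ?_⟩
  · unfold deleteAndNormalize
    split_ifs
    exacts [le_rfl, div_nonneg (hx.1 v) hs.le]
  · rw [← sum_add_sum_compl σ, sum_eq_zero fun v => deleteAndNormalize_eq_zero_of_mem,
      zero_add, ← div_self hs.ne', sum_div]
    exact sum_congr rfl fun v hv => if_neg (mem_compl.1 hv)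

theorem deleteAndNormalize_eq_self {x : V → ℝ} (hx : ∑ v, x v = 1) (hσ : ∀ v ∈ σ, x v = 0) :
    deleteAndNormalize σ x = x := by
  have hs : ∑ w ∈ σᶜ, x w = 1 := by
    rw [← hx, ← sum_add_sum_compl σ, sum_eq_zero hσ, zero_add]
  funext v
  by_cases hv : v ∈ σ
  · rw [deleteAndNormalize_eq_zero_of_mem hv, hσ v hv]
  · simp [deleteAndNormalize, hv, hs]

end DeleteAndNormalize

namespace ASC

variable {V : Type} [Fintype V] [DecidableEq V] {Γ : ASC V} {σ : Finset V} {x : V → ℝ}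

theorem sum_compl_pos_of_mem_sdiff (hx : x ∈ Γ.realization \ (Γ.restrict σ).realization) :
    0 < ∑ w ∈ σᶜ, x w := by
  obtain ⟨hxΓ, v, hvσ, hxv⟩ := mem_realization_sdiff_restrict_iff.1 hx
  exact sum_pos' (fun w _ => hxΓ.1 w) ⟨v, mem_compl.2 hvσ, (hxΓ.1 v).lt_of_ne' hxv⟩

theorem deleteAndNormalize_mem_realization_restrict_compl
    (hx : x ∈ Γ.realization \ (Γ.restrict σ).realization) :
    deleteAndNormalize σ x ∈ (Γ.restrict σᶜ).realization := by
  refine mem_realization_restrict_iff.2 ⟨?_, fun v hv => ?_⟩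
  · exact mem_realization_of_zero_imp_zero hx.1 (deleteAndNormalize_mem_stdSimplex
      (stdSimplex_of_mem_realization hx.1) (sum_compl_pos_of_mem_sdiff hx))
      fun v => deleteAndNormalize_eq_zero_of_eq_zero
  · exact deleteAndNormalize_eq_zero_of_mem (notMem_compl.1 hv)

theorem segment_deleteAndNormalize_subset
    (hx : x ∈ Γ.realization \ (Γ.restrict σ).realization) :
    segment ℝ x (deleteAndNormalize σ x) ⊆ Γ.realization \ (Γ.restrict σ).realization := by
  rintro _ ⟨a, b, ha, hb, hab, rfl⟩
  have hs := sum_compl_pos_of_mem_sdiff hx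
  have hxΔ := stdSimplex_of_mem_realization hx.1
  obtain ⟨-, v, hvσ, hxv⟩ := mem_realization_sdiff_restrict_iff.1 hx
  have hxv_pos : 0 < x v := (hxΔ.1 v).lt_of_ne' hxv
  have hseg : a • x + b • deleteAndNormalize σ x ∈ stdSimplex ℝ V :=
    convex_stdSimplex ℝ V hxΔ (deleteAndNormalize_mem_stdSimplex hxΔ hs) ha hb hab
  refine mem_realization_sdiff_restrict_iff.2 ⟨?_, v, hvσ, ?_⟩
  · refine mem_realization_of_zero_imp_zero hx.1 hseg fun w hxw => ?_
    simp [hxw, deleteAndNormalize_eq_zero_of_eq_zero hxw]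
  · have := convex_Ioi (0 : ℝ) hxv_pos (deleteAndNormalize_pos hvσ hxv_pos hs) ha hb hab
    simpa using this.ne'

theorem deleteAndNormalize_eq_self_of_mem (hx : x ∈ (Γ.restrict σᶜ).realization) :
    deleteAndNormalize σ x = x := by
  obtain ⟨hxΓ, hσ⟩ := mem_realization_restrict_iff.1 hx
  exact deleteAndNormalize_eq_self hxΓ.2.1 fun v hv => hσ v (notMem_compl.2 hv)

end ASC

/-- Lemma 2.4: for any subset `σ ⊆ V`, `‖Γ_{≤σ̂}‖` is a deformation retract of
`‖Γ‖ ∖ ‖Γ_{≤σ}‖`. -/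
theorem deformation_retract_realization {V : Type} [Fintype V] [DecidableEq V]
    (Γ : ASC V) (σ : Finset V) :
    IsDeformationRetract (ASC.realization (Γ.restrict σᶜ))
      (ASC.realization Γ \ ASC.realization (Γ.restrict σ)) := by
  exact isDeformationRetract_of_segment_subset (r := deleteAndNormalize σ)
    (Γ.realization_restrict_compl_subset σ)
    (continuousOn_deleteAndNormalize.mono fun x hx => (ASC.sum_compl_pos_of_mem_sdiff hx).ne')
    (fun _ => ASC.deleteAndNormalize_mem_realization_restrict_compl)
    (fun _ => ASC.deleteAndNormalize_eq_self_of_mem)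
    (fun _ => ASC.segment_deleteAndNormalize_subset)
end

section
/- Let Γ be an abstract simplicial complex on a finite vertex set V, let σ ∈ Γ be a face, and let τ_1, …, τ_m be the maximal faces of Γ containing σ. If τ_1 ∩ ⋯ ∩ τ_m properly contains σ, then the geometric realization ‖link_Γ σ‖ is contractible. -/
open Finset

/-!
Pick a vertex `v ∈ (τ₁ ∩ ⋯ ∩ τₘ) \ σ`. Every face `ρ` of `link_Γ σ` has `ρ ∪ σ` inside some
maximal face `τₖ`, which also contains `v`; so `link_Γ σ` is a cone with apex `v`. The
realization of a cone is star-convex about its apex, hence contractible.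
-/

namespace ASC

variable {V : Type}

def IsCone [DecidableEq V] (Γ : ASC V) (v : V) : Prop :=
  ∀ ρ ∈ Γ.faces, insert v ρ ∈ Γ.faces

theorem exists_isMaximalFace_superset [Finite V] (Γ : ASC V) {ρ : Finset V}
    (hρ : ρ ∈ Γ.faces) : ∃ t, Γ.IsMaximalFace t ∧ ρ ⊆ t := by
  obtain ⟨t, hρt, ht⟩ := (Set.toFinite Γ.faces).exists_le_maximal hρ
  exact ⟨t, ⟨ht.prop, fun t' ht' htt' => ht.eq_of_ge ht' htt'⟩, hρt⟩

theorem empty_mem_link_faces [DecidableEq V] {Γ : ASC V} {σ : Finset V} (hσ : σ ∈ Γ.faces) :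
    ∅ ∈ (Γ.link σ).faces :=
  ⟨by simpa using hσ, Finset.empty_inter σ⟩

theorem link_isCone [Finite V] [DecidableEq V] (Γ : ASC V) {σ : Finset V} {v : V}
    (hvσ : v ∉ σ) (hv : ∀ t, Γ.IsMaximalFace t → σ ⊆ t → v ∈ t) :
    (Γ.link σ).IsCone v := by
  rintro ρ ⟨hρσ, hdisj⟩
  obtain ⟨t, ht, hρσt⟩ := Γ.exists_isMaximalFace_superset hρσ
  have hvt : v ∈ t := hv t ht (Finset.subset_union_right.trans hρσt)
  refine ⟨Γ.down_closed ht.1 ?_, by rw [Finset.insert_inter_of_notMem hvσ, hdisj]⟩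
  rw [Finset.insert_union]
  exact Finset.insert_subset hvt hρσt

theorem mem_realization_of_support_subset [Fintype V] (Γ : ASC V) {x : V → ℝ} {τ : Finset V}
    (hx₀ : ∀ v, 0 ≤ x v) (hx₁ : ∑ v, x v = 1) (hτ : τ ∈ Γ.faces)
    (hxτ : ∀ v, x v ≠ 0 → v ∈ τ) : x ∈ Γ.realization := by
  classical
  refine ⟨hx₀, hx₁, Finset.univ.filter (x · ≠ 0), Γ.down_closed hτ ?_, by simp⟩
  intro v hv
  exact hxτ v (Finset.mem_filter.mp hv).2

section Cone

variable [Fintype V] [DecidableEq V] {Γ : ASC V} {v : V}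

theorem IsCone.starConvex_realization (hΓ : Γ.IsCone v) :
    StarConvex ℝ (Pi.single v 1) Γ.realization := by
  rintro y ⟨hy₀, hy₁, ρ, hρ, hyρ⟩ a b ha hb hab
  refine Γ.mem_realization_of_support_subset (τ := insert v ρ) (fun w => ?_) ?_ (hΓ ρ hρ)
    (fun w hw => ?_)
  · have hapex : (0 : V → ℝ) ≤ Pi.single v 1 := Pi.single_nonneg.mpr zero_le_one
    simp only [Pi.add_apply, Pi.smul_apply, smul_eq_mul]
    exact add_nonneg (mul_nonneg ha (hapex w)) (mul_nonneg hb (hy₀ w))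
  · simp [Finset.sum_add_distrib, ← Finset.mul_sum, hy₁, hab]
  · by_cases hwv : w = v
    · exact hwv ▸ Finset.mem_insert_self v ρ
    · refine Finset.mem_insert_of_mem ((hyρ w).mp fun hyw => hw ?_)
      simp [hwv, hyw]

theorem IsCone.contractibleSpace_realization (hΓ : Γ.IsCone v) (hne : ∅ ∈ Γ.faces) :
    ContractibleSpace Γ.realization := by
  have hv : {v} ∈ Γ.faces := by simpa using hΓ ∅ hne
  refine hΓ.starConvex_realization.contractibleSpace ⟨Pi.single v 1, ?_⟩
  refine Γ.mem_realization_of_support_subset (fun w => ?_) (by simp) hv (fun w hw => ?_)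
  · exact (Pi.single_nonneg.mpr zero_le_one : (0 : V → ℝ) ≤ Pi.single v 1) w
  · by_contra hwv
    simp [Finset.mem_singleton.not.mp hwv] at hw

end Cone

end ASC

/-- Lemma 2.5: let `σ ∈ Γ` and let `τ 1, …, τ m` be (an enumeration of) the maximal faces of `Γ`
containing `σ`.  If `τ 1 ∩ ⋯ ∩ τ m` properly contains `σ`, then `‖link_Γ σ‖` is contractible. -/
theorem link_contractible {V : Type} [Fintype V] [DecidableEq V]
    (Γ : ASC V) (σ : Finset V) (hσ : σ ∈ Γ.faces)
    (m : ℕ) (τ : Fin m → Finset V)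
    (hτ : ∀ t, (∃ k, τ k = t) ↔ (Γ.IsMaximalFace t ∧ σ ⊆ t))
    (hlt : σ ⊂ Finset.univ.inf τ) :
    ContractibleSpace ↥(ASC.realization (Γ.link σ)) := by
  obtain ⟨v, hv, hvσ⟩ := Finset.exists_of_ssubset hlt
  have hv_max : ∀ t, Γ.IsMaximalFace t → σ ⊆ t → v ∈ t := by
    intro t ht hσt
    obtain ⟨k, rfl⟩ := (hτ t).mpr ⟨ht, hσt⟩
    exact (Finset.inf_le (Finset.mem_univ k) : Finset.univ.inf τ ≤ τ k) hv
  exact (Γ.link_isCone hvσ hv_max).contractibleSpace_realization (ASC.empty_mem_link_faces hσ)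
end
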